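/- Let d ≥ 2, fix a unit vector |ψ'⟩ ∈ ℂ^d orthogonal to |0⟩, and on (ℂ^d)^{⊗3} let H = S_{12} + S_{13}. For t ∈ ℝ define the result channel of observer A on initial system state ψ as the reduced density matrix on the second tensor factor of e^{−itH}(ψ⊗|0⟩⊗|0⟩). Then this procedure is a measurement — i.e., there exist unit vectors ψ, φ whose reduced second-factor states differ — if and only if e^{3it} ≠ 1. In particular, when e^{3it} ≠ 1 the reduced second-factor states produced by the initial system states |0⟩ and |ψ'⟩ are different. -/

import Mathlib

open Matrix Kronecker
open scoped ComplexOrder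

noncomputable section

abbrev Mat (n : ℕ) := Matrix (Fin n) (Fin n) ℂ

/-- A density matrix: positive semidefinite with trace 1. -/
def IsDensity {n : Type*} [Fintype n] (ρ : Matrix n n ℂ) : Prop :=
  ρ.PosSemidef ∧ ρ.trace = 1

/-- The rank-one projector `|ψ⟩⟨ψ|`. -/
def proj {n : Type*} (ψ : n → ℂ) : Matrix n n ℂ :=
  Matrix.of fun i j => ψ i * star (ψ j)

/-- Partial trace over the first tensor factor. -/
def trFst {a b : Type*} [Fintype a] (X : Matrix (a × b) (a × b) ℂ) : Matrix b b ℂ :=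
  Matrix.of fun j l => ∑ i : a, X (i, j) (i, l)

/-- Partial trace over the second tensor factor. -/
def trSnd {a b : Type*} [Fintype b] (X : Matrix (a × b) (a × b) ℂ) : Matrix a a ℂ :=
  Matrix.of fun i k => ∑ j : b, X (i, j) (k, j)

/-- `id ⊗ Φ` acting on matrices over a product index type. -/
def idTensor {k d m : Type*} (Φ : Matrix d d ℂ → Matrix m m ℂ)
    (X : Matrix (k × d) (k × d) ℂ) : Matrix (k × m) (k × m) ℂ :=
  Matrix.of fun p q => Φ (Matrix.of fun j l => X (p.1, j) (q.1, l)) p.2 q.2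

/-- Complete positivity. -/
def IsCP {d m : ℕ} (Φ : Mat d → Mat m) : Prop :=
  ∀ (k : ℕ) (X : Matrix (Fin k × Fin d) (Fin k × Fin d) ℂ),
    X.PosSemidef → (idTensor Φ X).PosSemidef

/-- Trace preservation. -/
def IsTP {d m : ℕ} (Φ : Mat d → Mat m) : Prop :=
  ∀ X, (Φ X).trace = X.trace

/-- A quantum channel: linear, completely positive, trace preserving. -/
def IsChannel {d m : ℕ} (Φ : Mat d → Mat m) : Prop :=
  IsLinearMap ℂ Φ ∧ IsCP Φ ∧ IsTP Φ

/-- The maximally entangled unit vector `|Φ⁺⟩ = (1/√d) ∑ₖ |k⟩⊗|k⟩`. -/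
def phiPlusVec (d : ℕ) : Fin d × Fin d → ℂ :=
  fun p => if p.1 = p.2 then ((Real.sqrt d : ℝ) : ℂ)⁻¹ else 0

/-- The density matrix of the maximally entangled state. -/
def phiPlus (d : ℕ) : Matrix (Fin d × Fin d) (Fin d × Fin d) ℂ :=
  proj (phiPlusVec d)

/-- Von Neumann entropy `S(ρ) = -∑ λᵢ log λᵢ` over the eigenvalues of `ρ`. -/
def entropy {n : Type*} [Fintype n] [DecidableEq n] (ρ : Matrix n n ℂ) : ℝ :=
  if h : ρ.IsHermitian then -∑ i, h.eigenvalues i * Real.log (h.eigenvalues i) else 0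

/-- Quantum mutual information of a bipartite state. -/
def mutualInfo {a b : Type*} [Fintype a] [Fintype b] [DecidableEq a] [DecidableEq b]
    (τ : Matrix (a × b) (a × b) ℂ) : ℝ :=
  entropy (trSnd τ) + entropy (trFst τ) - entropy τ

/-- Elementary tensor of three vectors on `(ℂ^d)^{⊗3}`. -/
def tp3 {d : ℕ} (x y z : Fin d → ℂ) : Fin d × Fin d × Fin d → ℂ :=
  fun p => x p.1 * y p.2.1 * z p.2.2

/-- The basis vector `|0⟩` of `ℂ^d`. -/
def e0vec (d : ℕ) : Fin d → ℂ := fun i => if (i : ℕ) = 0 then 1 else 0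

/-- The unitary swapping the first and second tensor factors. -/
def S12 (d : ℕ) : Matrix (Fin d × Fin d × Fin d) (Fin d × Fin d × Fin d) ℂ :=
  Matrix.of fun p q => if p.1 = q.2.1 ∧ p.2.1 = q.1 ∧ p.2.2 = q.2.2 then 1 else 0

/-- The unitary swapping the first and third tensor factors. -/
def S13 (d : ℕ) : Matrix (Fin d × Fin d × Fin d) (Fin d × Fin d × Fin d) ℂ :=
  Matrix.of fun p q => if p.1 = q.2.2 ∧ p.2.1 = q.2.1 ∧ p.2.2 = q.1 then 1 else 0

/-- The reduced density matrix on the second factor of a tripartite vector state. -/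
def redSecond {d : ℕ} (v : Fin d × Fin d × Fin d → ℂ) : Mat d :=
  Matrix.of fun j l => ∑ i : Fin d, ∑ k : Fin d, v (i, j, k) * star (v (i, l, k))

/-!
Write `xyz` for `x ⊗ y ⊗ z`. For all `x, y`, `H = S₁₂ + S₁₃` has eigenvector `xyy + yxy + yyx` with
eigenvalue `2` and `2 xyy - yxy - yyx` with eigenvalue `-1`, so
`e^{-itH} (ψ00) = a ψ00 + b (0ψ0 + 00ψ)` with `a = (α + 2β)/3`, `b = (α - β)/3`, `α = e^{-2it}`,
`β = e^{it}`. If `e^{3it} = 1` then `α = β`, so `b = 0` and the second factor ends in `|0⟩⟨0|`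
whatever `ψ` was. Otherwise `b ≠ 0`: `ψ = |0⟩` still yields `|0⟩⟨0|`, but for `ψ ⊥ |0⟩` the `(0,0)`
entry is `|a|² + |b|² = 1 - |b|²`, because `|a|² + 2|b|² = (|α|² + 2|β|²)/3 = 1`.
-/

theorem Matrix.exp_mulVec_of_mulVec_eq_smul {𝕂 n : Type*} [RCLike 𝕂] [Fintype n] [DecidableEq n]
    {M : Matrix n n 𝕂} {w : n → 𝕂} {μ : 𝕂} (h : M *ᵥ w = μ • w) :
    NormedSpace.exp M *ᵥ w = NormedSpace.exp μ • w := by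
  let _ : NormedRing (Matrix n n 𝕂) := Matrix.linftyOpNormedRing
  let _ : NormedAlgebra 𝕂 (Matrix n n 𝕂) := Matrix.linftyOpNormedAlgebra
  -- instance search does not identify this uniform structure with the product one
  have : @CompleteSpace (Matrix n n 𝕂) PseudoMetricSpace.toUniformSpace :=
    FiniteDimensional.complete 𝕂 _
  have hpow (k : ℕ) : M ^ k *ᵥ w = μ ^ k • w := by
    induction k with
    | zero => simp
    | succ k ih => rw [pow_succ', ← mulVec_mulVec, ih, mulVec_smul, h, smul_smul, pow_succ]
  have hM := (NormedSpace.exp_series_hasSum_exp' (𝕂 := 𝕂) M).map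
    (mulVec.addMonoidHomLeft w) (continuous_id.matrix_mulVec continuous_const)
  have hμ := (NormedSpace.exp_series_hasSum_exp' (𝕂 := 𝕂) μ).smul_const w
  refine hM.unique ?_
  convert hμ using 2 with k
  simp [mulVec.addMonoidHomLeft, smul_mulVec, hpow, smul_smul]

theorem S12_mulVec_tp3 {d : ℕ} (x y z : Fin d → ℂ) : S12 d *ᵥ tp3 x y z = tp3 y x z := by
  ext ⟨i, j, k⟩
  simp [S12, mulVec, dotProduct, tp3, Fintype.sum_prod_type, ite_and, Finset.sum_ite_eq, mul_comm]

theorem S13_mulVec_tp3 {d : ℕ} (x y z : Fin d → ℂ) : S13 d *ᵥ tp3 x y z = tp3 z y x := by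
  ext ⟨i, j, k⟩
  simp [S13, mulVec, dotProduct, tp3, Fintype.sum_prod_type, ite_and, Finset.sum_ite_eq]
  ring

section SwapSum

variable {d : ℕ} (x y : Fin d → ℂ)

theorem S12_add_S13_mulVec_tp3 (z : Fin d → ℂ) :
    (S12 d + S13 d) *ᵥ tp3 x y z = tp3 y x z + tp3 z y x := by
  rw [add_mulVec, S12_mulVec_tp3, S13_mulVec_tp3]

theorem S12_add_S13_mulVec_symm :
    (S12 d + S13 d) *ᵥ (tp3 x y y + tp3 y x y + tp3 y y x) =
      (2 : ℂ) • (tp3 x y y + tp3 y x y + tp3 y y x) := by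
  simp only [mulVec_add, S12_add_S13_mulVec_tp3]
  module

theorem S12_add_S13_mulVec_mixed :
    (S12 d + S13 d) *ᵥ ((2 : ℂ) • tp3 x y y - tp3 y x y - tp3 y y x) =
      (-1 : ℂ) • ((2 : ℂ) • tp3 x y y - tp3 y x y - tp3 y y x) := by
  simp only [mulVec_sub, mulVec_smul, S12_add_S13_mulVec_tp3]
  module

theorem exp_smul_S12_add_S13_mulVec_tp3 (s : ℂ) :
    NormedSpace.exp (s • (S12 d + S13 d)) *ᵥ tp3 x y y =
      ((Complex.exp (2 * s) + 2 * Complex.exp (-s)) / 3) • tp3 x y y +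
        ((Complex.exp (2 * s) - Complex.exp (-s)) / 3) • (tp3 y x y + tp3 y y x) := by
  have hsymm := exp_mulVec_of_mulVec_eq_smul (M := s • (S12 d + S13 d)) (μ := 2 * s) <| by
    rw [smul_mulVec, S12_add_S13_mulVec_symm x y, smul_smul, mul_comm]
  have hmixed := exp_mulVec_of_mulVec_eq_smul (M := s • (S12 d + S13 d)) (μ := -s) <| by
    rw [smul_mulVec, S12_add_S13_mulVec_mixed x y, smul_smul, mul_neg_one]
  have hdecomp : tp3 x y y = (3⁻¹ : ℂ) • (tp3 x y y + tp3 y x y + tp3 y y x) +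
      (3⁻¹ : ℂ) • ((2 : ℂ) • tp3 x y y - tp3 y x y - tp3 y y x) := by
    module
  rw [hdecomp, mulVec_add, mulVec_smul, mulVec_smul, hsymm, hmixed, ← Complex.exp_eq_exp_ℂ]
  module

end SwapSum

theorem redSecond_smul {d : ℕ} (c : ℂ) (v : Fin d × Fin d × Fin d → ℂ) :
    redSecond (c • v) = (c * star c) • redSecond v := by
  ext j l
  simp only [redSecond, Matrix.smul_apply, of_apply, Pi.smul_apply, smul_eq_mul, star_mul',
    Finset.mul_sum]
  refine Finset.sum_congr rfl fun i _ => Finset.sum_congr rfl fun k _ => ?_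
  ring

theorem redSecond_tp3 {d : ℕ} (x y z : Fin d → ℂ) :
    redSecond (tp3 x y z) = ((star x ⬝ᵥ x) * (star z ⬝ᵥ z)) • proj y := by
  ext j l
  simp only [redSecond, tp3, proj, Matrix.smul_apply, of_apply, smul_eq_mul, dotProduct,
    Pi.star_apply, star_mul']
  rw [Finset.sum_mul_sum, Finset.sum_mul]
  refine Finset.sum_congr rfl fun i _ => ?_
  rw [Finset.sum_mul]
  refine Finset.sum_congr rfl fun k _ => ?_
  ring

theorem redSecond_smul_tp3_of_unit {d : ℕ} {c : ℂ} (hc : c * star c = 1) {x z : Fin d → ℂ}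
    (hx : star x ⬝ᵥ x = 1) (hz : star z ⬝ᵥ z = 1) (y : Fin d → ℂ) :
    redSecond (c • tp3 x y z) = proj y := by
  rw [redSecond_smul, redSecond_tp3, hc, hx, hz, mul_one, one_smul, one_smul]

theorem redSecond_apply_self {d : ℕ} (v : Fin d × Fin d × Fin d → ℂ) (j : Fin d) :
    redSecond v j j = star (fun p : Fin d × Fin d => v (p.1, j, p.2)) ⬝ᵥ
      (fun p : Fin d × Fin d => v (p.1, j, p.2)) := by
  simp only [redSecond, of_apply, dotProduct, Fintype.sum_prod_type, Pi.star_apply, mul_comm]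

theorem star_dotProduct_outer {m n : Type*} [Fintype m] [Fintype n] (x x' : m → ℂ)
    (z z' : n → ℂ) :
    star (fun p : m × n => x p.1 * z p.2) ⬝ᵥ (fun p : m × n => x' p.1 * z' p.2) =
      (star x ⬝ᵥ x') * (star z ⬝ᵥ z') := by
  simp only [dotProduct, Fintype.sum_prod_type, Pi.star_apply, star_mul', Finset.sum_mul_sum]
  refine Finset.sum_congr rfl fun i _ => Finset.sum_congr rfl fun k _ => ?_
  ring

theorem e0vec_apply {d : ℕ} (h0 : 0 < d) (i : Fin d) :
    e0vec d i = if i = ⟨0, h0⟩ then 1 else 0 := by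
  simp [e0vec, Fin.ext_iff]

theorem e0vec_apply_zero {d : ℕ} (h0 : 0 < d) : e0vec d ⟨0, h0⟩ = 1 := by
  simp [e0vec]

theorem star_e0vec (d : ℕ) : star (e0vec d) = e0vec d := by
  ext i
  simp [e0vec, apply_ite]

theorem e0vec_dotProduct {d : ℕ} (h0 : 0 < d) (v : Fin d → ℂ) : e0vec d ⬝ᵥ v = v ⟨0, h0⟩ := by
  simp [dotProduct, e0vec_apply h0]

theorem dotProduct_e0vec {d : ℕ} (h0 : 0 < d) (v : Fin d → ℂ) : v ⬝ᵥ e0vec d = v ⟨0, h0⟩ := by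
  rw [dotProduct_comm, e0vec_dotProduct h0]

theorem star_e0vec_dotProduct_self {d : ℕ} (h0 : 0 < d) : star (e0vec d) ⬝ᵥ e0vec d = 1 := by
  rw [star_e0vec, e0vec_dotProduct h0, e0vec_apply_zero h0]

theorem redSecond_apply_zero_zero_of_orthogonal {d : ℕ} (h0 : 0 < d) {ψ : Fin d → ℂ}
    (hψ : star ψ ⬝ᵥ ψ = 1) (hψ0 : ψ ⟨0, h0⟩ = 0) (a b : ℂ) :
    redSecond (a • tp3 ψ (e0vec d) (e0vec d) +
        b • (tp3 (e0vec d) ψ (e0vec d) + tp3 (e0vec d) (e0vec d) ψ)) ⟨0, h0⟩ ⟨0, h0⟩ =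
      a * star a + b * star b := by
  have hslice : (fun p : Fin d × Fin d => (a • tp3 ψ (e0vec d) (e0vec d) +
        b • (tp3 (e0vec d) ψ (e0vec d) + tp3 (e0vec d) (e0vec d) ψ)) (p.1, ⟨0, h0⟩, p.2)) =
      a • (fun p : Fin d × Fin d => ψ p.1 * e0vec d p.2) +
        b • (fun p : Fin d × Fin d => e0vec d p.1 * ψ p.2) := by
    ext ⟨i, k⟩
    simp [tp3, e0vec_apply_zero h0, hψ0]
  have heψ : star (e0vec d) ⬝ᵥ ψ = 0 := by
    rw [star_e0vec, e0vec_dotProduct h0, hψ0]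
  have hψe : star ψ ⬝ᵥ e0vec d = 0 := by
    rw [dotProduct_e0vec h0, Pi.star_apply, hψ0, star_zero]
  rw [redSecond_apply_self, hslice]
  simp only [star_add, star_smul, add_dotProduct, dotProduct_add, smul_dotProduct,
    dotProduct_smul, star_dotProduct_outer, hψ, star_e0vec_dotProduct_self h0, heψ, hψe,
    smul_eq_mul]
  ring

theorem mul_star_add_mul_star_ne_one {α β : ℂ} (hα : α * star α = 1) (hβ : β * star β = 1)
    (hne : α ≠ β) :
    (α + 2 * β) / 3 * star ((α + 2 * β) / 3) + (α - β) / 3 * star ((α - β) / 3) ≠ 1 := by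
  have hb : (α - β) / 3 * star ((α - β) / 3) ≠ 0 :=
    (CStarRing.mul_star_self_eq_zero_iff _).not.mpr <|
      div_ne_zero (sub_ne_zero.mpr hne) three_ne_zero
  intro h
  apply hb
  simp only [star_div₀, star_add, star_sub, star_mul', star_ofNat] at h ⊢
  linear_combination (-1 : ℂ) * h + (1 / 3 : ℂ) * hα + (2 / 3 : ℂ) * hβ

theorem Complex.exp_mul_star_self_of_re_eq_zero {z : ℂ} (hz : z.re = 0) :
    Complex.exp z * star (Complex.exp z) = 1 := by
  rw [Complex.star_def, ← Complex.exp_conj, ← Complex.exp_add, Complex.add_conj, hz]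
  simp

theorem exp_two_mul_neg_eq_exp_neg_neg_iff (t : ℝ) :
    Complex.exp (2 * -(Complex.I * t)) = Complex.exp (-(-(Complex.I * t))) ↔
      Complex.exp (3 * Complex.I * t) = 1 := by
  rw [show -(-(Complex.I * t)) = 2 * -(Complex.I * t) + 3 * Complex.I * t by ring,
    Complex.exp_add, left_eq_mul₀ (Complex.exp_ne_zero _)]

theorem exp_two_mul_neg_I_mul_star_self (t : ℝ) :
    Complex.exp (2 * -(Complex.I * t)) * star (Complex.exp (2 * -(Complex.I * t))) = 1 :=
  Complex.exp_mul_star_self_of_re_eq_zero (by simp)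

theorem exp_neg_neg_I_mul_star_self (t : ℝ) :
    Complex.exp (-(-(Complex.I * t))) * star (Complex.exp (-(-(Complex.I * t)))) = 1 :=
  Complex.exp_mul_star_self_of_re_eq_zero (by simp)

theorem redSecond_evolve_e0vec {d : ℕ} (h0 : 0 < d) (t : ℝ) :
    redSecond (NormedSpace.exp ((-(Complex.I * (t : ℂ))) • (S12 d + S13 d)) *ᵥ
      tp3 (e0vec d) (e0vec d) (e0vec d)) = proj (e0vec d) := by
  rw [exp_smul_S12_add_S13_mulVec_tp3]
  convert redSecond_smul_tp3_of_unit (exp_two_mul_neg_I_mul_star_self t)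
    (star_e0vec_dotProduct_self h0) (star_e0vec_dotProduct_self h0) (e0vec d) using 2
  module

theorem redSecond_evolve_of_exp_eq_one {d : ℕ} (h0 : 0 < d) {t : ℝ}
    (ht : Complex.exp (3 * Complex.I * t) = 1) {ψ : Fin d → ℂ} (hψ : star ψ ⬝ᵥ ψ = 1) :
    redSecond (NormedSpace.exp ((-(Complex.I * (t : ℂ))) • (S12 d + S13 d)) *ᵥ
      tp3 ψ (e0vec d) (e0vec d)) = proj (e0vec d) := by
  rw [exp_smul_S12_add_S13_mulVec_tp3, ← (exp_two_mul_neg_eq_exp_neg_neg_iff t).mpr ht]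
  convert redSecond_smul_tp3_of_unit (exp_two_mul_neg_I_mul_star_self t)
    hψ (star_e0vec_dotProduct_self h0) (e0vec d) using 2
  module

theorem redSecond_evolve_e0vec_ne {d : ℕ} (h0 : 0 < d) {t : ℝ}
    (ht : Complex.exp (3 * Complex.I * t) ≠ 1) {ψ : Fin d → ℂ} (hψ : star ψ ⬝ᵥ ψ = 1)
    (hψ0 : ψ ⟨0, h0⟩ = 0) :
    redSecond (NormedSpace.exp ((-(Complex.I * (t : ℂ))) • (S12 d + S13 d)) *ᵥ
        tp3 (e0vec d) (e0vec d) (e0vec d)) ≠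
      redSecond (NormedSpace.exp ((-(Complex.I * (t : ℂ))) • (S12 d + S13 d)) *ᵥ
        tp3 ψ (e0vec d) (e0vec d)) := by
  intro heq
  have h00 := congrFun₂ heq ⟨0, h0⟩ ⟨0, h0⟩
  rw [redSecond_evolve_e0vec h0, exp_smul_S12_add_S13_mulVec_tp3,
    redSecond_apply_zero_zero_of_orthogonal h0 hψ hψ0, proj, of_apply, e0vec_apply_zero h0,
    star_one, mul_one] at h00
  exact mul_star_add_mul_star_ne_one (exp_two_mul_neg_I_mul_star_self t)
    (exp_neg_neg_I_mul_star_self t) (mt (exp_two_mul_neg_eq_exp_neg_neg_iff t).mp ht) h00.symm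

/-- The simultaneous-swap procedure is a measurement by observer A (its reduced memory state
distinguishes two initial pure system states) iff `e^{3it} ≠ 1`; in particular, when
`e^{3it} ≠ 1` the initial states `|0⟩` and `|ψ'⟩` produce different memory states. -/
theorem stmt_18 (d : ℕ) (hd : 2 ≤ d) (ψ' : Fin d → ℂ)
    (hψ' : star ψ' ⬝ᵥ ψ' = 1) (horth : star (e0vec d) ⬝ᵥ ψ' = 0) (t : ℝ) :
    ((∃ ψ φ : Fin d → ℂ, star ψ ⬝ᵥ ψ = 1 ∧ star φ ⬝ᵥ φ = 1 ∧
        redSecond (NormedSpace.exp ((-(Complex.I * (t : ℂ))) • (S12 d + S13 d)) *ᵥ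
            tp3 ψ (e0vec d) (e0vec d)) ≠
          redSecond (NormedSpace.exp ((-(Complex.I * (t : ℂ))) • (S12 d + S13 d)) *ᵥ
            tp3 φ (e0vec d) (e0vec d))) ↔
      Complex.exp (3 * Complex.I * (t : ℂ)) ≠ 1) ∧
    (Complex.exp (3 * Complex.I * (t : ℂ)) ≠ 1 →
      redSecond (NormedSpace.exp ((-(Complex.I * (t : ℂ))) • (S12 d + S13 d)) *ᵥ
          tp3 (e0vec d) (e0vec d) (e0vec d)) ≠
        redSecond (NormedSpace.exp ((-(Complex.I * (t : ℂ))) • (S12 d + S13 d)) *ᵥ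
          tp3 ψ' (e0vec d) (e0vec d))) := by
  have h0 : 0 < d := by omega
  have hψ'0 : ψ' ⟨0, h0⟩ = 0 := by rwa [star_e0vec, e0vec_dotProduct h0] at horth
  refine ⟨⟨?_, fun ht => ⟨e0vec d, ψ', star_e0vec_dotProduct_self h0, hψ',
    redSecond_evolve_e0vec_ne h0 ht hψ' hψ'0⟩⟩, fun ht => redSecond_evolve_e0vec_ne h0 ht hψ' hψ'0⟩
  rintro ⟨ψ, φ, hψ, hφ, hne⟩ ht
  exact hne <| by
    rw [redSecond_evolve_of_exp_eq_one h0 ht hψ, redSecond_evolve_of_exp_eq_one h0 ht hφ]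

end
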